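/- arXiv:2509.07948 — 3 statements merged into one kernel-verified Lean document; each statement's English description precedes it below -/
import Mathlib

section
/- For every natural number n and every element q of a commutative ring, the sum over all permutations σ of {1,…,n} of q raised to the number of inversions of σ equals the q-factorial, i.e. ∑_{σ ∈ S_n} q^{inv(σ)} = ∏_{k=1}^{n} (1 + q + q² + ⋯ + q^{k-1}). -/
/-!
A permutation `σ` of `Fin (n + 1)` is determined by `p = σ 0` and the permutation `e` of `Fin n`
recording the relative order of the remaining values, `σ x.succ = p.succAbove (e x)`. The pairs
`(0, j)` contribute exactly `p` inversions (the `p` values below `p` all sit at later positions),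
and the other pairs contribute `inv e`. Hence the generating polynomial for `n + 1` is the one for
`n` times `1 + q + ⋯ + q ^ n`.
-/

def inversions {n : ℕ} (σ : Equiv.Perm (Fin n)) : ℕ :=
  (Finset.univ.filter fun p : Fin n × Fin n => p.1 < p.2 ∧ σ p.2 < σ p.1).card

open Finset

def inversionCount {α : Type*} [LinearOrder α] {n : ℕ} (f : Fin n → α) : ℕ :=
  #{p : Fin n × Fin n | p.1 < p.2 ∧ f p.2 < f p.1}

lemma inversions_eq_inversionCount {n : ℕ} (σ : Equiv.Perm (Fin n)) :
    inversions σ = inversionCount σ := rfl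

section inversionCount

variable {α β : Type*} [LinearOrder α] [LinearOrder β] {n : ℕ}

lemma StrictMono.inversionCount_comp {g : α → β} (hg : StrictMono g) (f : Fin n → α) :
    inversionCount (g ∘ f) = inversionCount f := by
  simp only [inversionCount, Function.comp_apply, hg.lt_iff_lt]

lemma inversionCount_succ (f : Fin (n + 1) → α) :
    inversionCount f = #{j : Fin n | f j.succ < f 0} + inversionCount (f ∘ Fin.succ) := by
  simp only [inversionCount, card_filter, Fintype.sum_prod_type, Fin.sum_univ_succ,
    lt_irrefl, Fin.succ_pos, Fin.not_lt_zero, Fin.succ_lt_succ_iff, Function.comp_apply]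
  simp

end inversionCount

section insertPerm

variable {n : ℕ}

lemma card_filter_succAbove_lt (p : Fin (n + 1)) : #{y : Fin n | p.succAbove y < p} = p := by
  simp_rw [Fin.succAbove_lt_iff_castSucc_lt, Fin.lt_def, Fin.val_castSucc, Fin.card_filter_val_lt]
  exact min_eq_right (Nat.lt_succ_iff.mp p.isLt)

def insertPerm (p : Fin (n + 1)) (e : Equiv.Perm (Fin n)) : Equiv.Perm (Fin (n + 1)) :=
  ((finSuccEquiv n).trans e.optionCongr).trans (finSuccEquiv' p).symm

@[simp]
lemma insertPerm_zero (p : Fin (n + 1)) (e : Equiv.Perm (Fin n)) : insertPerm p e 0 = p := by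
  simp [insertPerm]

@[simp]
lemma insertPerm_succ (p : Fin (n + 1)) (e : Equiv.Perm (Fin n)) (x : Fin n) :
    insertPerm p e x.succ = p.succAbove (e x) := by
  simp [insertPerm]

lemma insertPerm_bijective :
    Function.Bijective fun pe : Fin (n + 1) × Equiv.Perm (Fin n) ↦ insertPerm pe.1 pe.2 := by
  refine (Fintype.bijective_iff_injective_and_card _).2
    ⟨?_, by simp [Fintype.card_perm, Nat.factorial_succ]⟩
  rintro ⟨p, e⟩ ⟨p', e'⟩ h
  obtain rfl : p = p' := by simpa using DFunLike.congr_fun h 0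
  obtain rfl : e = e' := Equiv.ext fun x ↦ by simpa using DFunLike.congr_fun h x.succ
  rfl

lemma inversions_insertPerm (p : Fin (n + 1)) (e : Equiv.Perm (Fin n)) :
    inversions (insertPerm p e) = p + inversions e := by
  have htail : insertPerm p e ∘ Fin.succ = p.succAbove ∘ e := funext (insertPerm_succ p e)
  have hhead : #{j : Fin n | p.succAbove (e j) < p} = #{y : Fin n | p.succAbove y < p} :=
    card_equiv e (by simp)
  rw [inversions_eq_inversionCount, inversionCount_succ, htail,
    (Fin.strictMono_succAbove p).inversionCount_comp, insertPerm_zero]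
  simp only [insertPerm_succ, hhead, card_filter_succAbove_lt, inversions_eq_inversionCount]

end insertPerm

/-- The sum over all permutations of `q` to the inversion number equals the `q`-factorial
`∏_{k=1}^{n} (1 + q + ⋯ + q^{k-1})`. -/
theorem sum_q_pow_inversions_eq_qFactorial {R : Type*} [CommRing R] (q : R) (n : ℕ) :
    ∑ σ : Equiv.Perm (Fin n), q ^ inversions σ =
      ∏ k ∈ Finset.range n, ∑ j ∈ Finset.range (k + 1), q ^ j := by
  induction n with
  | zero => simp [inversions]
  | succ n ih =>
    rw [← insertPerm_bijective.sum_comp, Fintype.sum_prod_type, prod_range_succ, ← ih,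
      ← Fin.sum_univ_eq_sum_range, mul_comm, sum_mul_sum]
    simp only [inversions_insertPerm, pow_add]
end

section
/- For every real number q with |q| < 1 and every natural number n, the sum over all permutations σ of {1,…,n} of |q|^{inv(σ)} is at most (1−|q|)^{-n}. -/
/-!
The Lehmer code `c(σ)ᵢ = #{j > i | σ j < σ i}` of a permutation determines it (read from left to
right, `σ i` is the value not yet used that has exactly `c(σ)ᵢ` unused values below it), takes
values in `{0, …, n - 1}`, and sums to `inv σ`. Hence `∑_σ |q| ^ inv σ` is at most the same sum
over all codes in `{0, …, n - 1}ⁿ`, which factors as `(∑_{k < n} |q| ^ k) ^ n ≤ (1 - |q|)⁻ⁿ`.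
-/

open Finset Function

theorem Finset.sum_prod_comp_le_pow_sum_of_injective {ι κ β R : Type*} [Fintype ι] [Fintype κ]
    [CommSemiring R] [PartialOrder R] [IsOrderedRing R]
    {s : Finset β} {f : β → R} (hf : ∀ b ∈ s, 0 ≤ f b) {c : ι → κ → β} (hc : Injective c)
    (hcs : ∀ x k, c x k ∈ s) :
    ∑ x, ∏ k, f (c x k) ≤ (∑ b ∈ s, f b) ^ Fintype.card κ := by
  classical
  rw [← sum_image (f := fun g : κ → β => ∏ k, f (g k)) fun x _ y _ h => hc h, ← card_univ,
    ← prod_const, ← sum_prod_piFinset]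
  refine sum_le_sum_of_subset_of_nonneg ?_ fun g hg _ => prod_nonneg fun k _ => ?_
  · exact image_subset_iff.2 fun x _ => Fintype.mem_piFinset.2 (hcs x)
  · exact hf _ (Fintype.mem_piFinset.1 hg k)

theorem Finset.strictMonoOn_card_Iio_sdiff {α : Type*} [Preorder α] [LocallyFiniteOrderBot α]
    [DecidableEq α] (T : Finset α) : StrictMonoOn (fun a => #(Iio a \ T)) (↑T)ᶜ := by
  intro a ha b _ hab
  refine card_lt_card <| (ssubset_iff_of_subset ?_).2 ⟨a, ?_, ?_⟩
  · exact sdiff_subset_sdiff (Iio_subset_Iio hab.le) le_rfl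
  · simpa [hab] using ha
  · simp

namespace Equiv.Perm

variable {α : Type*} [LinearOrder α] [Fintype α]

def lehmerCode (σ : Perm α) (i : α) : ℕ := #{j | i < j ∧ σ j < σ i}

theorem lehmerCode_lt_card (σ : Perm α) (i : α) : σ.lehmerCode i < Fintype.card α :=
  card_lt_univ_of_notMem (x := i) (by simp)

variable [LocallyFiniteOrderBot α]

theorem lehmerCode_eq_card_sdiff (σ : Perm α) (i : α) :
    σ.lehmerCode i = #(Iio (σ i) \ (Iio i).image σ) := by
  rw [lehmerCode, ← card_map σ.toEmbedding]
  congr 1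
  ext x
  obtain ⟨j, rfl⟩ := σ.surjective x
  simp only [mem_map_equiv, mem_filter, mem_univ, true_and, mem_sdiff, mem_Iio, mem_image,
    EmbeddingLike.apply_eq_iff_eq, exists_eq_right, symm_apply_apply]
  refine ⟨fun h => ⟨h.2, h.1.asymm⟩, fun ⟨hσ, hj⟩ => ⟨(not_lt.1 hj).lt_of_ne ?_, hσ⟩⟩
  rintro rfl
  exact lt_irrefl _ hσ

theorem lehmerCode_injective : Injective (lehmerCode : Perm α → α → ℕ) := by
  intro σ τ h
  ext i
  induction i using WellFoundedLT.induction with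
  | ind i ih =>
    have himage : (Iio i).image σ = (Iio i).image τ :=
      image_congr fun j hj => ih j (mem_Iio.1 hj)
    have hcode := congrFun h i
    rw [lehmerCode_eq_card_sdiff, lehmerCode_eq_card_sdiff, ← himage] at hcode
    exact (strictMonoOn_card_Iio_sdiff _).injOn (by simp) (by simp [himage]) hcode

end Equiv.Perm

theorem inversions_eq_sum_lehmerCode {n : ℕ} (σ : Equiv.Perm (Fin n)) :
    inversions σ = ∑ i, σ.lehmerCode i := by
  rw [inversions, card_filter, Fintype.sum_prod_type]
  exact sum_congr rfl fun i _ => (card_filter _ _).symm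

/-- For `|q| < 1`, the `|q|`-weighted count of permutations by inversion number is bounded by
`(1 - |q|)⁻¹ ^ n`; this is the operator norm bound `‖P_q|_{H^{⊗n}}‖ ≤ D_q^n`. -/
theorem sum_abs_q_pow_inversions_le (q : ℝ) (hq : |q| < 1) (n : ℕ) :
    ∑ σ : Equiv.Perm (Fin n), |q| ^ inversions σ ≤ ((1 - |q|)⁻¹) ^ n := by
  calc ∑ σ : Equiv.Perm (Fin n), |q| ^ inversions σ
      = ∑ σ : Equiv.Perm (Fin n), ∏ i, |q| ^ σ.lehmerCode i := by
        simp only [inversions_eq_sum_lehmerCode, prod_pow_eq_pow_sum]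
    _ ≤ (∑ j ∈ range n, |q| ^ j) ^ Fintype.card (Fin n) :=
        sum_prod_comp_le_pow_sum_of_injective (fun _ _ => by positivity)
          Equiv.Perm.lehmerCode_injective
          fun σ i => mem_range.2 (by simpa using σ.lehmerCode_lt_card i)
    _ ≤ (1 - |q|)⁻¹ ^ n := by
        rw [Fintype.card_fin]
        gcongr
        simpa using geom_sum_Ico_le_of_lt_one (m := 0) (n := n) (abs_nonneg q) hq
end

section
/- Let π be a partial pairing of {1,…,n}, i.e. a finite set of ordered pairs (s,t) with 1 ≤ s < t ≤ n whose underlying two-element sets are pairwise disjoint, and define cr(π) = #{((i,j),(k,l)) ∈ π × π : i < k < j < l}, sep(π) = ∑_{(s,t)∈π} #{u : s ≤ u ≤ t, u not covered by π}, and crb(π) = cr(π) + sep(π). If j ∈ {1,…,n} is not covered by π, then crb(π ∪ {(j, n+1)}) = crb(π) + #{u : j < u ≤ n, u not covered by π}, where on the left π ∪ {(j,n+1)} is regarded as a partial pairing of {1,…,n+1}. -/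
/-!
The new pair `(j, n+1)` ends to the right of every pair of `π`, so the crossings it creates are
exactly with the pairs of `π` that strictly enclose `j`. On the separation side, `j` becomes
covered, so each of those enclosing pairs loses one uncovered point, which cancels the new
crossings; what remains is the contribution of the new pair itself, namely the uncovered points
strictly between `j` and `n+1`.
-/

/-- A point `u` is covered by the partial pairing `π` if it occurs as a coordinate of some
pair of `π`. -/
def Covered (π : Finset (ℕ × ℕ)) (u : ℕ) : Prop :=
  ∃ p ∈ π, u = p.1 ∨ u = p.2

instance (π : Finset (ℕ × ℕ)) (u : ℕ) : Decidable (Covered π u) :=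
  decidable_of_iff (∃ p ∈ π, u = p.1 ∨ u = p.2) Iff.rfl

/-- The crossing number `cr(π) = #{((i,j),(k,l)) ∈ π × π : i < k < j < l}`. -/
def cr (π : Finset (ℕ × ℕ)) : ℕ :=
  ((π ×ˢ π).filter fun x : (ℕ × ℕ) × ℕ × ℕ =>
    x.1.1 < x.2.1 ∧ x.2.1 < x.1.2 ∧ x.1.2 < x.2.2).card

/-- The separation number `sep(π) = ∑_{(s,t)∈π} #{u : s ≤ u ≤ t, u not covered by π}`. -/
def sep (π : Finset (ℕ × ℕ)) : ℕ :=
  ∑ p ∈ π, ((Finset.Icc p.1 p.2).filter fun u => ¬ Covered π u).card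

/-- The intertwining number `crb(π) = cr(π) + sep(π)`. -/
def crb (π : Finset (ℕ × ℕ)) : ℕ := cr π + sep π


open Finset

def gaps (π : Finset (ℕ × ℕ)) (a b : ℕ) : Finset ℕ :=
  (Icc a b).filter fun u => ¬ Covered π u

def enclosing (π : Finset (ℕ × ℕ)) (s : ℕ) : Finset (ℕ × ℕ) :=
  π.filter fun q => q.1 < s ∧ s < q.2

@[simp]
lemma mem_gaps {π : Finset (ℕ × ℕ)} {a b u : ℕ} :
    u ∈ gaps π a b ↔ (a ≤ u ∧ u ≤ b) ∧ ¬ Covered π u := by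
  simp [gaps]

lemma covered_insert_iff (p : ℕ × ℕ) (π : Finset (ℕ × ℕ)) (u : ℕ) :
    Covered (insert p π) u ↔ u = p.1 ∨ u = p.2 ∨ Covered π u := by
  simp [Covered, or_assoc]

lemma gaps_insert (p : ℕ × ℕ) (π : Finset (ℕ × ℕ)) (a b : ℕ) :
    gaps (insert p π) a b = ((gaps π a b).erase p.1).erase p.2 := by
  ext u
  simp only [mem_gaps, mem_erase, covered_insert_iff]
  tauto

lemma cr_eq_sum (π : Finset (ℕ × ℕ)) :
    cr π = ∑ p ∈ π, ∑ q ∈ π, if p.1 < q.1 ∧ q.1 < p.2 ∧ p.2 < q.2 then 1 else 0 := by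
  rw [cr, card_filter, sum_product]

lemma cr_insert_of_forall_lt {π : Finset (ℕ × ℕ)} {s t : ℕ} (hπ : ∀ q ∈ π, q.2 < t) :
    cr (insert (s, t) π) = cr π + #(enclosing π s) := by
  have hnot : (s, t) ∉ π := fun h => (hπ _ h).false
  have hnest : ∀ q ∈ π, (if q.1 < s ∧ s < q.2 ∧ q.2 < t then 1 else 0) =
      if q.1 < s ∧ s < q.2 then 1 else 0 := fun q hq => by
    simp [hπ q hq]
  have hout : ∑ q ∈ π, (if s < q.1 ∧ q.1 < t ∧ t < q.2 then 1 else 0) = 0 :=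
    sum_eq_zero fun q hq => if_neg fun h => (h.2.2.trans (hπ q hq)).false
  simp only [cr_eq_sum, sum_insert hnot, lt_irrefl, and_false, if_false, hout, sum_add_distrib,
    sum_congr rfl hnest, enclosing, card_filter]
  ring

lemma card_erase_add_ite {α : Type*} [DecidableEq α] (A : Finset α) (a : α) :
    #(A.erase a) + (if a ∈ A then 1 else 0) = #A := by
  split_ifs with h
  · exact card_erase_add_one h
  · rw [erase_eq_of_notMem h, add_zero]

lemma sep_insert_add_card_enclosing {π : Finset (ℕ × ℕ)} {s t : ℕ}
    (hπ : ∀ q ∈ π, q.2 ≤ t) (hs : ¬ Covered π s) :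
    sep (insert (s, t + 1) π) + #(enclosing π s) = sep π + #(gaps π (s + 1) t) := by
  have hnot : (s, t + 1) ∉ π := fun h => by simpa using hπ _ h
  have hsep : ∀ σ, sep σ = ∑ p ∈ σ, #(gaps σ p.1 p.2) := fun _ => rfl
  have hnew : gaps (insert (s, t + 1) π) s (t + 1) = gaps π (s + 1) t := by
    ext u
    simp only [gaps_insert, mem_erase, mem_gaps]
    grind
  have hold : ∀ q ∈ π, #(gaps (insert (s, t + 1) π) q.1 q.2) +
      (if q.1 < s ∧ s < q.2 then 1 else 0) = #(gaps π q.1 q.2) := fun q hq => by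
    have hq1 : s ≠ q.1 := fun h => hs ⟨q, hq, .inl h⟩
    have hq2 : s ≠ q.2 := fun h => hs ⟨q, hq, .inr h⟩
    have hs_mem : s ∈ gaps π q.1 q.2 ↔ q.1 < s ∧ s < q.2 := by
      simp only [mem_gaps, hs, not_false_eq_true, and_true]
      omega
    have ht : t + 1 ∉ (gaps π q.1 q.2).erase s := by
      simp only [mem_erase, mem_gaps]
      have := hπ q hq
      omega
    rw [gaps_insert, erase_eq_of_notMem ht]
    simpa only [hs_mem] using card_erase_add_ite (gaps π q.1 q.2) s
  rw [hsep, hsep, sum_insert hnot, hnew, enclosing, card_filter, add_assoc, ← sum_add_distrib,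
    sum_congr rfl hold, add_comm]

theorem crb_insert_pair_general (n : ℕ) (π : Finset (ℕ × ℕ))
    (hmem : ∀ p ∈ π, 1 ≤ p.1 ∧ p.1 < p.2 ∧ p.2 ≤ n)
    (j : ℕ) (hfree : ¬ Covered π j) :
    crb (insert (j, n + 1) π) =
      crb π + ((Finset.Icc (j + 1) n).filter fun u => ¬ Covered π u).card := by
  have hπ : ∀ q ∈ π, q.2 ≤ n := fun q hq => (hmem q hq).2.2
  have hcr := cr_insert_of_forall_lt (s := j) fun q hq => Nat.lt_add_one_of_le (hπ q hq)
  have hsep := sep_insert_add_card_enclosing hπ hfree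
  change _ = _ + #(gaps π (j + 1) n)
  rw [crb, crb]
  omega

/-- If `π` is a partial pairing of `{1,…,n}` and `j ∈ {1,…,n}` is not covered by `π`, then
`crb(π ∪ {(j, n+1)}) = crb(π) + #{u : j < u ≤ n, u not covered by π}`. -/
theorem crb_insert_pair (n : ℕ) (π : Finset (ℕ × ℕ))
    (hmem : ∀ p ∈ π, 1 ≤ p.1 ∧ p.1 < p.2 ∧ p.2 ≤ n)
    (hdisj : ∀ p ∈ π, ∀ p' ∈ π, p ≠ p' →
      p.1 ≠ p'.1 ∧ p.1 ≠ p'.2 ∧ p.2 ≠ p'.1 ∧ p.2 ≠ p'.2)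
    (j : ℕ) (hj1 : 1 ≤ j) (hjn : j ≤ n) (hfree : ¬ Covered π j) :
    crb (insert (j, n + 1) π) =
      crb π + ((Finset.Icc (j + 1) n).filter fun u => ¬ Covered π u).card :=
  crb_insert_pair_general n π hmem j hfree
end
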